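/- arXiv:2110.09070 — 5 statements merged into one kernel-verified Lean document; each statement's English description precedes it below -/
import Mathlib

section
/- Let $(V,N)$ and $(V',N')$ be pairs of finite-dimensional $\mathbb{Z}$-graded complex vector spaces with degree-$1$ endomorphisms. Then $(V,N)$ is isomorphic to $(V',N')$ (as graded spaces with endomorphisms) if and only if $V \cong V'$ as graded vector spaces and the restriction of $N$ to $\mathrm{Image}\,N$ is isomorphic to the restriction of $N'$ to $\mathrm{Image}\,N'$ (as graded spaces with endomorphisms). -/
/-!
An isomorphism of `VN`-pairs carries `Image N` onto `Image N'`, which gives one direction.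
Conversely, given `φ : Image N ≅ Image N'`, the isomorphism in degree `j` has to extend `φ` on
`range N_{j-1}` and satisfy `N' ∘ e_j = φ ∘ N_j`. Lift `φ ∘ N_j` through `N'` to some `G`,
then correct `G` by a map into `ker N'_j` that makes it agree with `φ` on `range N_{j-1}` and
sends a complement `T` of `range N_{j-1} ⊓ ker N_j` in `ker N_j` isomorphically onto the
corresponding complement `T'`. By rank-nullity, `T` and `T'` have the same dimension. The
corrected map is injective on `ker N_j`, hence injective, and since `dim V_j = dim V'_j` it is an
isomorphism.
-/

open Module LinearMap

/-- An isomorphism of `VN`-pairs: a family of degree-preserving linear equivalences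
commuting with the degree-one endomorphisms. -/
def VNIso (V : ℤ → Type) [∀ i, AddCommGroup (V i)] [∀ i, Module ℂ (V i)]
    (N : ∀ i, V i →ₗ[ℂ] V (i + 1))
    (V' : ℤ → Type) [∀ i, AddCommGroup (V' i)] [∀ i, Module ℂ (V' i)]
    (N' : ∀ i, V' i →ₗ[ℂ] V' (i + 1)) : Prop :=
  ∃ e : ∀ i, V i ≃ₗ[ℂ] V' i, ∀ (i : ℤ) (x : V i), e (i + 1) (N i x) = N' i (e i x)

/-- The degree-one endomorphism induced by `N` on the image pair
`(Image N, N|_{Image N})`; here the degree-`(i+1)` component of `Image N`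
is `range (N i) ⊆ V (i+1)`. -/
noncomputable def imageMap (V : ℤ → Type) [∀ i, AddCommGroup (V i)] [∀ i, Module ℂ (V i)]
    (N : ∀ i, V i →ₗ[ℂ] V (i + 1)) (i : ℤ) :
    ↥(LinearMap.range (N i)) →ₗ[ℂ] ↥(LinearMap.range (N (i + 1))) :=
  LinearMap.codRestrict (LinearMap.range (N (i + 1)))
    ((N (i + 1)).domRestrict (LinearMap.range (N i)))
    (fun x => LinearMap.mem_range_self _ _)

section LinearAlgebra

variable {k A A' B B' M : Type*} [DivisionRing k] [AddCommGroup A] [Module k A]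
  [AddCommGroup A'] [Module k A'] [AddCommGroup B] [Module k B] [AddCommGroup B'] [Module k B']
  [AddCommGroup M] [Module k M]

theorem LinearMap.exists_extend_of_agree {p q : Submodule k A} (u : p →ₗ[k] M)
    (v : q →ₗ[k] M) (huv : ∀ (x : p) (y : q), (x : A) = y → u x = v y) :
    ∃ h : A →ₗ[k] M, (∀ x : p, h x = u x) ∧ ∀ y : q, h y = v y := by
  obtain ⟨h, hh⟩ := (LinearPMap.sup ⟨p, u⟩ ⟨q, v⟩ huv).toFun.exists_extend
  refine ⟨h, fun x => ?_, fun y => ?_⟩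
  · exact (LinearMap.congr_fun hh ⟨x, Submodule.mem_sup_left x.2⟩).trans
      ((LinearPMap.left_le_sup _ _ huv).2 rfl).symm
  · exact (LinearMap.congr_fun hh ⟨y, Submodule.mem_sup_right y.2⟩).trans
      ((LinearPMap.right_le_sup _ _ huv).2 rfl).symm

theorem finrank_inf_eq_of_mem_iff {R P : Submodule k A} {R' P' : Submodule k A'}
    (f : R ≃ₗ[k] R') (h : ∀ r : R, (r : A) ∈ P ↔ (f r : A') ∈ P') :
    finrank k ↥(R ⊓ P) = finrank k ↥(R' ⊓ P') := by
  have hmap :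
      ((R ⊓ P).comap R.subtype).map (f : R →ₗ[k] R') = (R' ⊓ P').comap R'.subtype := by
    ext x
    simp [Submodule.map_equiv_eq_comap_symm, h]
  calc finrank k ↥(R ⊓ P) = finrank k ((R ⊓ P).comap R.subtype) :=
        (Submodule.comapSubtypeEquivOfLe inf_le_left).finrank_eq.symm
    _ = finrank k (((R ⊓ P).comap R.subtype).map (f : R →ₗ[k] R')) :=
        (f.finrank_map_eq _).symm
    _ = finrank k ↥(R' ⊓ P') := by
        rw [hmap]; exact (Submodule.comapSubtypeEquivOfLe inf_le_left).finrank_eq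

theorem nonempty_linearEquiv_of_disjoint_of_sup_eq [FiniteDimensional k A]
    [FiniteDimensional k A'] {P T K : Submodule k A} {P' T' K' : Submodule k A'}
    (hT : Disjoint P T) (hPT : P ⊔ T = K) (hT' : Disjoint P' T') (hPT' : P' ⊔ T' = K')
    (hP : finrank k P = finrank k P') (hK : finrank k K = finrank k K') :
    Nonempty (T ≃ₗ[k] T') := by
  refine FiniteDimensional.nonempty_linearEquiv_of_finrank_eq ?_
  have h := Submodule.finrank_sup_add_finrank_inf_eq P T
  have h' := Submodule.finrank_sup_add_finrank_inf_eq P' T'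
  rw [hPT, hT.eq_bot, finrank_bot] at h
  rw [hPT', hT'.eq_bot, finrank_bot] at h'
  omega

theorem finrank_ker_eq_of_finrank_eq [FiniteDimensional k A] [FiniteDimensional k A']
    (n : A →ₗ[k] B) (n' : A' →ₗ[k] B') (hA : finrank k A = finrank k A')
    (hn : finrank k (range n) = finrank k (range n')) :
    finrank k (ker n) = finrank k (ker n') := by
  have := finrank_range_add_finrank_ker n
  have := finrank_range_add_finrank_ker n'
  omega

section Intertwining

variable {n : A →ₗ[k] B} {n' : A' →ₗ[k] B'} (g : range n ≃ₗ[k] range n')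

theorem coe_apply_rangeRestrict_eq_zero_iff (a : A) :
    (g (n.rangeRestrict a) : B') = 0 ↔ a ∈ ker n := by
  rw [ZeroMemClass.coe_eq_zero, LinearEquiv.map_eq_zero_iff, ← mem_ker, ker_rangeRestrict]

theorem exists_lift_intertwining :
    ∃ G : A →ₗ[k] A', (∀ a, n' (G a) = g (n.rangeRestrict a)) ∧ ker n ≤ ker G := by
  obtain ⟨σ, hσ⟩ := n'.rangeRestrict.exists_rightInverse_of_surjective n'.range_rangeRestrict
  refine ⟨σ ∘ₗ g.toLinearMap ∘ₗ n.rangeRestrict, fun a => ?_, fun a ha => ?_⟩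
  · exact congrArg Subtype.val (LinearMap.congr_fun hσ (g (n.rangeRestrict a)))
  · rw [← ker_rangeRestrict] at ha
    simp [mem_ker.1 ha]

theorem injective_of_intertwining {e : A →ₗ[k] A'}
    (he : ∀ a, n' (e a) = g (n.rangeRestrict a)) (hK : Disjoint (ker n) (ker e)) :
    Function.Injective e := by
  have hle : ker e ≤ ker n := fun a ha => by
    rw [← coe_apply_rangeRestrict_eq_zero_iff g, ← he, mem_ker.1 ha, map_zero]
  exact ker_eq_bot.1 (hK.eq_bot_of_ge hle)

theorem mem_ker_iff_of_intertwining {R : Submodule k A} {R' : Submodule k A'} (f : R ≃ₗ[k] R')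
    (hfg : ∀ r : R, n' (f r) = g (n.rangeRestrict r)) (r : R) :
    (r : A) ∈ ker n ↔ (f r : A') ∈ ker n' := by
  rw [← coe_apply_rangeRestrict_eq_zero_iff g, ← hfg, mem_ker]

end Intertwining

theorem exists_linearEquiv_extend_intertwining [FiniteDimensional k A]
    (hA : Nonempty (A ≃ₗ[k] A')) {n : A →ₗ[k] B} {n' : A' →ₗ[k] B'}
    {R : Submodule k A} {R' : Submodule k A'} (f : R ≃ₗ[k] R') (g : range n ≃ₗ[k] range n')
    (hfg : ∀ r : R, n' (f r) = g (n.rangeRestrict r)) :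
    ∃ e : A ≃ₗ[k] A', (∀ r : R, e r = f r) ∧ ∀ a, n' (e a) = g (n.rangeRestrict a) := by
  have : FiniteDimensional k A' := hA.some.finiteDimensional
  have hf_ker := mem_ker_iff_of_intertwining g f hfg
  obtain ⟨T, hT_disj, hT_sup⟩ := IsModularLattice.exists_disjoint_and_sup_eq
    (inf_le_right : R ⊓ ker n ≤ ker n)
  obtain ⟨T', hT'_disj, hT'_sup⟩ := IsModularLattice.exists_disjoint_and_sup_eq
    (inf_le_right : R' ⊓ ker n' ≤ ker n')
  have hTK : T ≤ ker n := hT_sup ▸ le_sup_right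
  have hT'K : T' ≤ ker n' := hT'_sup ▸ le_sup_right
  obtain ⟨j⟩ := nonempty_linearEquiv_of_disjoint_of_sup_eq hT_disj hT_sup hT'_disj hT'_sup
    (finrank_inf_eq_of_mem_iff f hf_ker)
    (finrank_ker_eq_of_finrank_eq n n' hA.some.finrank_eq g.finrank_eq)
  obtain ⟨G, hG, hGK⟩ := exists_lift_intertwining (n' := n') g
  have hfG : ∀ r : R, (f r : A') - G r ∈ ker n' := fun r => by
    rw [mem_ker, map_sub, hfg, hG, sub_self]
  obtain ⟨h, hhR, hhT⟩ := LinearMap.exists_extend_of_agree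
    (codRestrict (ker n') (R'.subtype ∘ₗ f.toLinearMap - G ∘ₗ R.subtype) hfG)
    (Submodule.inclusion hT'K ∘ₗ j.toLinearMap) fun x y hxy => by
      have hy0 : (y : A) = 0 := Submodule.disjoint_def.1 hT_disj y ⟨hxy ▸ x.2, hTK y.2⟩ y.2
      rw [show x = 0 from Subtype.ext (hxy.trans hy0), show y = 0 from Subtype.ext hy0,
        map_zero, map_zero]
  set e : A →ₗ[k] A' := G + (ker n').subtype ∘ₗ h
  have he_R : ∀ r : R, e r = f r := fun r => by
    simp only [e, LinearMap.add_apply, comp_apply, Submodule.subtype_apply, hhR]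
    exact add_sub_cancel (G r) (f r : A')
  have he_n : ∀ a, n' (e a) = g (n.rangeRestrict a) := fun a => by
    simp [e, hG, mem_ker.1 (h a).2]
  have he_inj : Function.Injective e := by
    refine injective_of_intertwining g he_n (Submodule.disjoint_def.2 fun a haK ha => ?_)
    rw [← hT_sup] at haK
    obtain ⟨p, hp, t, ht, rfl⟩ := Submodule.mem_sup.1 haK
    have he_pt : e (p + t) = f ⟨p, hp.1⟩ + j ⟨t, ht⟩ := by
      rw [map_add, ← he_R ⟨p, hp.1⟩]
      simp [e, mem_ker.1 (hGK (hTK ht)), show h t = _ from hhT ⟨t, ht⟩]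
    rw [mem_ker, he_pt] at ha
    have hfp : (f ⟨p, hp.1⟩ : A') = 0 := Submodule.disjoint_def.1 hT'_disj _
      ⟨(f _).2, (hf_ker _).1 hp.2⟩ (eq_neg_of_add_eq_zero_left ha ▸ neg_mem (j _).2)
    have hjt : (j ⟨t, ht⟩ : A') = 0 := by rwa [hfp, zero_add] at ha
    simp only [ZeroMemClass.coe_eq_zero, LinearEquiv.map_eq_zero_iff, Submodule.mk_eq_zero]
      at hfp hjt
    rw [hfp, hjt, add_zero]
  exact ⟨e.linearEquivOfInjective he_inj hA.some.finrank_eq, he_R, he_n⟩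

end LinearAlgebra

theorem LinearMap.map_range_eq_of_comp_eq {k M M' N N' : Type*} [Semiring k]
    [AddCommMonoid M] [Module k M] [AddCommMonoid M'] [Module k M'] [AddCommMonoid N]
    [Module k N] [AddCommMonoid N'] [Module k N'] {φ : M →ₗ[k] N} {φ' : M' →ₗ[k] N'}
    (e₀ : M ≃ₗ[k] M') (e₁ : N ≃ₗ[k] N')
    (h : e₁.toLinearMap ∘ₗ φ = φ' ∘ₗ e₀.toLinearMap) :
    (range φ).map e₁.toLinearMap = range φ' := by
  rw [← range_comp, h, range_comp_of_range_eq_top _ e₀.range]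

section VNPair

variable {V : ℤ → Type} [∀ i, AddCommGroup (V i)] [∀ i, Module ℂ (V i)]
  {N : ∀ i, V i →ₗ[ℂ] V (i + 1)}
  {V' : ℤ → Type} [∀ i, AddCommGroup (V' i)] [∀ i, Module ℂ (V' i)]
  {N' : ∀ i, V' i →ₗ[ℂ] V' (i + 1)}

theorem VNIso.image (h : VNIso V N V' N') :
    VNIso (fun i => range (N i)) (imageMap V N) (fun i => range (N' i)) (imageMap V' N') := by
  obtain ⟨e, he⟩ := h
  have hmap i : (range (N i)).map (e (i + 1)).toLinearMap = range (N' i) :=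
    map_range_eq_of_comp_eq (e i) (e (i + 1)) (LinearMap.ext (he i))
  exact ⟨fun i => (e (i + 1)).ofSubmodules _ _ (hmap i), fun i x => Subtype.ext (he (i + 1) x)⟩

theorem VNIso.of_image [∀ i, FiniteDimensional ℂ (V i)]
    (hV : ∀ i, Nonempty (V i ≃ₗ[ℂ] V' i))
    (h : VNIso (fun i => range (N i)) (imageMap V N) (fun i => range (N' i)) (imageMap V' N')) :
    VNIso V N V' N' := by
  obtain ⟨φ, hφ⟩ := h
  choose E hE_ext hE_int using fun i => exists_linearEquiv_extend_intertwining (hV (i + 1))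
    (φ i) (φ (i + 1)) fun r => (congrArg Subtype.val (hφ i r)).symm
  -- `E i` lives in degree `i + 1`; reindex along `i ↦ i + 1`.
  let e := Equiv.piCongrLeft (fun j => V j ≃ₗ[ℂ] V' j) (Equiv.addRight 1) E
  have he i : e (i + 1) = E i :=
    Equiv.piCongrLeft_apply_apply (fun j => V j ≃ₗ[ℂ] V' j) (Equiv.addRight 1) E i
  have he_int j (x : V j) : N' j (e j x) = φ j ⟨N j x, mem_range_self _ x⟩ := by
    obtain ⟨i, rfl⟩ : ∃ i, j = i + 1 := ⟨j - 1, by omega⟩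
    rw [he]
    exact hE_int i x
  exact ⟨e, fun i x => by rw [he_int, he, hE_ext i ⟨N i x, mem_range_self _ x⟩]⟩

end VNPair

theorem vnIso_iff_graded_iso_and_image_iso_general
    (V : ℤ → Type) [∀ i, AddCommGroup (V i)] [∀ i, Module ℂ (V i)]
    [∀ i, FiniteDimensional ℂ (V i)]
    (N : ∀ i, V i →ₗ[ℂ] V (i + 1))
    (V' : ℤ → Type) [∀ i, AddCommGroup (V' i)] [∀ i, Module ℂ (V' i)]
    (N' : ∀ i, V' i →ₗ[ℂ] V' (i + 1)) :
    VNIso V N V' N' ↔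
      ((∀ i, Nonempty (V i ≃ₗ[ℂ] V' i)) ∧
        VNIso (fun i => ↥(LinearMap.range (N i))) (imageMap V N)
              (fun i => ↥(LinearMap.range (N' i))) (imageMap V' N')) :=
  ⟨fun h => ⟨fun i => ⟨h.choose i⟩, h.image⟩, fun h => VNIso.of_image h.1 h.2⟩

/-- Two `VN`-pairs `(V,N)` and `(V',N')` of finite-dimensional
`ℤ`-graded complex vector spaces with degree-one endomorphisms are isomorphic iff
`V ≅ V'` as graded vector spaces and `(Image N, N|_{Image N}) ≅ (Image N', N'|_{Image N'})`
as `VN`-pairs. -/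
theorem vnIso_iff_graded_iso_and_image_iso
    (V : ℤ → Type) [∀ i, AddCommGroup (V i)] [∀ i, Module ℂ (V i)]
    [∀ i, FiniteDimensional ℂ (V i)] (hV : {i : ℤ | Nontrivial (V i)}.Finite)
    (N : ∀ i, V i →ₗ[ℂ] V (i + 1))
    (V' : ℤ → Type) [∀ i, AddCommGroup (V' i)] [∀ i, Module ℂ (V' i)]
    [∀ i, FiniteDimensional ℂ (V' i)] (hV' : {i : ℤ | Nontrivial (V' i)}.Finite)
    (N' : ∀ i, V' i →ₗ[ℂ] V' (i + 1)) :
    VNIso V N V' N' ↔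
      ((∀ i, Nonempty (V i ≃ₗ[ℂ] V' i)) ∧
        VNIso (fun i => ↥(LinearMap.range (N i))) (imageMap V N)
              (fun i => ↥(LinearMap.range (N' i))) (imageMap V' N')) :=
  vnIso_iff_graded_iso_and_image_iso_general V N V' N'
end

section
/- Let $\mathfrak{o}$ be a discrete valuation ring (noetherian local), $N$ an $\mathfrak{o}$-module of finite length, and $L, L'$ finitely generated free $\mathfrak{o}$-modules of the same rank with surjective homomorphisms $f: L \twoheadrightarrow N$ and $f': L' \twoheadrightarrow N$. Then there exists an isomorphism $\alpha: L \to L'$ of $\mathfrak{o}$-modules with $f = f' \circ \alpha$. -/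
/-!
Over a local ring `R`, fix a minimal presentation `π : R^d ↠ N`, i.e. one with
`ker π ⊆ 𝔪 R^d`. A surjection `f : L ↠ N` from a projective module lifts through `π` to some
`g : L → R^d`, and `π` lifts through `f` to some `h`; then `g ∘ h` is an endomorphism of `R^d`
fixing `π`, hence an automorphism by Nakayama, so `g` is a split surjection. This gives
`L ≅ ker g × R^d` with `f = π ∘ pr₂`, where `ker g` is free of rank `rank L - d`; comparing the
decompositions of `L` and `L'` produces `α`.
-/

open Module LinearMap TensorProduct

namespace IsLocalRing

variable {R : Type*} [CommRing R] [IsLocalRing R] {N : Type*} [AddCommGroup N] [Module R N]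

theorem surjective_of_comp_eq_self {P : Type*} [AddCommGroup P] [Module R P]
    [Module.Finite R P] {π : P →ₗ[R] N} (hπ : ker π ≤ maximalIdeal R • ⊤)
    {e : P →ₗ[R] P} (he : π ∘ₗ e = π) : Function.Surjective e := by
  refine e.surjective_of_surjective_comp_mkQ _ (maximalIdeal_le_jacobson ⊥) ?_
  rintro ⟨p⟩
  refine ⟨p, (Submodule.Quotient.eq _).mpr (hπ ?_)⟩
  rw [mem_ker, map_sub, ← LinearMap.comp_apply π e, he, sub_self]

theorem exists_surjective_ker_le_smul_top [Module.Finite R N] :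
    ∃ (d : ℕ) (π : (Fin d → R) →ₗ[R] N), Function.Surjective π ∧ ker π ≤ maximalIdeal R • ⊤ := by
  let b := Module.finBasis (ResidueField R) (ResidueField R ⊗[R] N)
  obtain ⟨v, hv⟩ := (TensorProduct.mk_surjective R N (ResidueField R)
    Ideal.Quotient.mk_surjective).comp_left b
  refine ⟨_, Fintype.linearCombination R v, ?_, fun c hc ↦ ?_⟩
  · rw [← range_eq_top, Fintype.range_linearCombination]
    exact span_eq_top_of_tmul_eq_basis v b (congr_fun hv)
  · have hres : ∑ i, residue R (c i) • b i = 0 := by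
      rw [mem_ker, Fintype.linearCombination_apply] at hc
      simpa [← hv, ← ResidueField.algebraMap_eq, algebraMap_smul] using
        congrArg (TensorProduct.mk R (ResidueField R) N 1) hc
    have hmem : ∀ i, c i ∈ maximalIdeal R := fun i ↦
      (residue_eq_zero_iff _).mp (Fintype.linearIndependent_iff.mp b.linearIndependent _ hres i)
    rw [pi_eq_sum_univ c]
    exact Submodule.sum_mem _ fun i _ ↦ Submodule.smul_mem_smul (hmem i) trivial

theorem exists_comp_eq_and_comp_eq_id {L P : Type*} [AddCommGroup L] [Module R L]
    [Projective R L] [AddCommGroup P] [Module R P] [Projective R P] [Module.Finite R P]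
    {f : L →ₗ[R] N} (hf : Function.Surjective f) {π : P →ₗ[R] N} (hπ : Function.Surjective π)
    (hker : ker π ≤ maximalIdeal R • ⊤) :
    ∃ g : L →ₗ[R] P, π ∘ₗ g = f ∧ ∃ s : P →ₗ[R] L, g ∘ₗ s = LinearMap.id := by
  obtain ⟨g, hg⟩ := projective_lifting_property π f hπ
  obtain ⟨h, hh⟩ := projective_lifting_property f π hf
  have hgh : π ∘ₗ (g ∘ₗ h) = π := by rw [← LinearMap.comp_assoc, hg, hh]
  let e := LinearEquiv.ofBijective (g ∘ₗ h)
    (OrzechProperty.bijective_of_surjective_endomorphism _ (surjective_of_comp_eq_self hker hgh))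
  exact ⟨g, hg, h ∘ₗ e.symm, e.comp_symm⟩

theorem finite_and_free_of_linearEquiv_prod {L K P : Type*} [AddCommGroup L]
    [Module R L] [Module.Free R L] [Module.Finite R L] [AddCommGroup K] [Module R K]
    [AddCommGroup P] [Module R P] (e : L ≃ₗ[R] K × P) : Module.Finite R K ∧ Module.Free R K :=
  have hfin : Module.Finite R K :=
    .of_surjective (fst R K P ∘ₗ e.toLinearMap)
      ((fst_surjective (R := R) (M₂ := P)).comp e.surjective)
  have : Projective R K :=
    .of_split (e.symm.toLinearMap ∘ₗ inl R K P) (fst R K P ∘ₗ e.toLinearMap) (by ext; simp)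
  ⟨hfin, free_of_flat_of_isLocalRing⟩

theorem exists_linearEquiv_comp_eq_of_finrank_eq {L L' : Type*}
    [AddCommGroup L] [Module R L] [Module.Free R L] [Module.Finite R L]
    [AddCommGroup L'] [Module R L'] [Module.Free R L'] [Module.Finite R L']
    (hrank : finrank R L = finrank R L') {f : L →ₗ[R] N} {f' : L' →ₗ[R] N}
    (hf : Function.Surjective f) (hf' : Function.Surjective f') :
    ∃ α : L ≃ₗ[R] L', f = f' ∘ₗ α := by
  have : Module.Finite R N := .of_surjective f hf
  obtain ⟨d, π, hπ, hker⟩ := exists_surjective_ker_le_smul_top (R := R) (N := N)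
  obtain ⟨g, rfl, s, hs⟩ := exists_comp_eq_and_comp_eq_id hf hπ hker
  obtain ⟨g', rfl, s', hs'⟩ := exists_comp_eq_and_comp_eq_id hf' hπ hker
  obtain ⟨e, -, hge⟩ := (exact_subtype_ker_map g).splitSurjectiveEquiv
    (ker g).injective_subtype ⟨s, hs⟩
  obtain ⟨e', -, hge'⟩ := (exact_subtype_ker_map g').splitSurjectiveEquiv
    (ker g').injective_subtype ⟨s', hs'⟩
  obtain ⟨_, _⟩ := finite_and_free_of_linearEquiv_prod e
  obtain ⟨_, _⟩ := finite_and_free_of_linearEquiv_prod e'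
  have hK : finrank R (ker g) = finrank R (ker g') := by
    have := e.finrank_eq.symm.trans (hrank.trans e'.finrank_eq)
    rw [finrank_prod, finrank_prod] at this
    omega
  refine ⟨e ≪≫ₗ (LinearEquiv.ofFinrankEq _ _ hK).prodCongr (.refl R _) ≪≫ₗ e'.symm, ?_⟩
  ext l
  simp [hge, hge']

end IsLocalRing

theorem exists_linearEquiv_comp_of_surjective_general
    (𝒪 : Type) [CommRing 𝒪] [IsDomain 𝒪] [IsDiscreteValuationRing 𝒪]
    (N : Type) [AddCommGroup N] [Module 𝒪 N]
    (L L' : Type) [AddCommGroup L] [Module 𝒪 L] [AddCommGroup L'] [Module 𝒪 L']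
    [Module.Free 𝒪 L] [Module.Finite 𝒪 L] [Module.Free 𝒪 L'] [Module.Finite 𝒪 L']
    (hrank : Module.finrank 𝒪 L = Module.finrank 𝒪 L')
    (f : L →ₗ[𝒪] N) (f' : L' →ₗ[𝒪] N)
    (hf : Function.Surjective f) (hf' : Function.Surjective f') :
    ∃ α : L ≃ₗ[𝒪] L', f = f'.comp α.toLinearMap :=
  IsLocalRing.exists_linearEquiv_comp_eq_of_finrank_eq hrank hf hf'

/-- Over a DVR `𝒪`, given a finite-length module `N`, finitely generated
free modules `L`, `L'` of the same rank and surjections `f : L ↠ N`, `f' : L' ↠ N`,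
there is an isomorphism `α : L ≅ L'` with `f = f' ∘ α`. -/
theorem exists_linearEquiv_comp_of_surjective
    (𝒪 : Type) [CommRing 𝒪] [IsDomain 𝒪] [IsDiscreteValuationRing 𝒪]
    (N : Type) [AddCommGroup N] [Module 𝒪 N] (hN : IsFiniteLength 𝒪 N)
    (L L' : Type) [AddCommGroup L] [Module 𝒪 L] [AddCommGroup L'] [Module 𝒪 L']
    [Module.Free 𝒪 L] [Module.Finite 𝒪 L] [Module.Free 𝒪 L'] [Module.Finite 𝒪 L']
    (hrank : Module.finrank 𝒪 L = Module.finrank 𝒪 L')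
    (f : L →ₗ[𝒪] N) (f' : L' →ₗ[𝒪] N)
    (hf : Function.Surjective f) (hf' : Function.Surjective f') :
    ∃ α : L ≃ₗ[𝒪] L', f = f'.comp α.toLinearMap :=
  exists_linearEquiv_comp_of_surjective_general 𝒪 N L L' hrank f f' hf hf'
end

section
/- Let $\mathfrak{o}$ be a discrete valuation ring, $N$ a finite-length $\mathfrak{o}$-module generated by $n$ elements $x_1, \ldots, x_n$. Then for any free $\mathfrak{o}$-module $L$ of rank $n$ and any surjective homomorphism $f: L \to N$, there exists an $\mathfrak{o}$-basis $y_1, \ldots, y_n$ of $L$ with $f(y_i) = x_i$ for all $i$. -/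
/-!
Over a local ring `R` the argument only uses Nakayama's lemma. If every `x i` lies in `𝔪 N`
then `N = 0`; otherwise lift some `x i ∉ 𝔪 N` to `z ∈ L`. Then `z ∉ 𝔪 L`, so `z` has a unit
coefficient with respect to any generating family of `L`, and `L ⧸ R z` is again generated by
`n - 1` elements. Induction applied to `L ⧸ R z ↠ N ⧸ R (x i)` gives lifts of the remaining
`x`'s which together with `z` generate `L`. When `L` is free of rank `n`, a generating family
of `n` vectors is a basis, since a surjective endomorphism of a finite module is injective.
-/

open Function Submodule IsLocalRing

section

variable {R L N : Type*} [CommRing R] [AddCommGroup L] [Module R L] [AddCommGroup N] [Module R N]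

theorem span_range_mkQ_comp_succAbove_eq_top {n : ℕ} {v : Fin (n + 1) → L}
    (hv : span R (Set.range v) = ⊤) (q : Submodule R L) {j : Fin (n + 1)}
    (hj : q.mkQ (v j) ∈ span R (Set.range fun k => q.mkQ (v (j.succAbove k)))) :
    span R (Set.range fun k => q.mkQ (v (j.succAbove k))) = ⊤ := by
  rw [eq_top_iff, ← range_mkQ q, LinearMap.range_eq_map, ← hv, map_span, span_le]
  rintro _ ⟨_, ⟨i, rfl⟩, rfl⟩
  exact Fin.succAboveCases j hj (fun k => subset_span ⟨k, rfl⟩) i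

theorem span_range_insertNth_eq_top {n : ℕ} (i : Fin (n + 1)) {z : L} {y : Fin n → L}
    (hy : span R (Set.range fun k => (R ∙ z).mkQ (y k)) = ⊤) :
    span R (Set.range (Fin.insertNth i z y)) = ⊤ := by
  set p := span R (Set.range (Fin.insertNth i z y))
  have hz : (R ∙ z) ≤ p :=
    (span_singleton_le_iff_mem _ _).mpr (subset_span ⟨i, by simp⟩)
  have hmap : map (R ∙ z).mkQ p = ⊤ := by
    rw [eq_top_iff, ← hy, map_span, span_le]
    rintro _ ⟨k, rfl⟩
    exact subset_span ⟨y k, ⟨i.succAbove k, by simp⟩, rfl⟩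
  rwa [Submodule.map_mkQ_eq_top, sup_eq_right.mpr hz] at hmap

theorem mapQ_map_surjective {f : L →ₗ[R] N} (hf : Surjective f) (p : Submodule R L) :
    Surjective (p.mapQ (p.map f) f (le_comap_map f p)) := by
  intro u
  obtain ⟨x, rfl⟩ := mkQ_surjective _ u
  obtain ⟨y, rfl⟩ := hf x
  exact ⟨p.mkQ y, rfl⟩

theorem exists_apply_eq_and_mkQ_eq_of_mapQ_eq (f : L →ₗ[R] N) (p : Submodule R L) {u : L ⧸ p}
    {x : N} (h : p.mapQ (p.map f) f (le_comap_map f p) u = (p.map f).mkQ x) :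
    ∃ y, f y = x ∧ p.mkQ y = u := by
  obtain ⟨y, rfl⟩ := p.mkQ_surjective u
  obtain ⟨w, hw, hfw⟩ := (Submodule.Quotient.eq _).mp h
  refine ⟨y - w, by rw [map_sub, hfw, sub_sub_cancel], ?_⟩
  rw [map_sub, mkQ_apply p w, (Submodule.Quotient.mk_eq_zero p).mpr hw, sub_zero]

variable [IsLocalRing R]

theorem subsingleton_of_span_eq_top_of_mem_maximalIdeal_smul {ι : Type*} [Finite ι]
    {x : ι → N} (hx : span R (Set.range x) = ⊤)
    (hm : ∀ i, x i ∈ maximalIdeal R • (⊤ : Submodule R N)) : Subsingleton N := by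
  have hfg : (⊤ : Submodule R N).FG := hx ▸ fg_span (Set.finite_range x)
  have hle : span R (Set.range x) ≤ maximalIdeal R • ⊤ :=
    span_le.mpr (Set.range_subset_iff.mpr hm)
  rw [hx] at hle
  rw [← Submodule.subsingleton_iff R, ← subsingleton_iff_bot_eq_top]
  exact (eq_bot_of_le_smul_of_le_jacobson_bot _ _ hfg hle (maximalIdeal_le_jacobson ⊥)).symm

theorem exists_span_range_mkQ_comp_succAbove_eq_top {n : ℕ} {v : Fin (n + 1) → L}
    (hv : span R (Set.range v) = ⊤) {z : L} (hz : z ∉ maximalIdeal R • (⊤ : Submodule R L)) :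
    ∃ j : Fin (n + 1), span R (Set.range fun k => (R ∙ z).mkQ (v (j.succAbove k))) = ⊤ := by
  -- a generator with a unit coefficient in `z` is redundant modulo `z`
  obtain ⟨a, ha⟩ :=
    (mem_span_range_iff_exists_fun R).mp (hv ▸ mem_top : z ∈ span R (Set.range v))
  obtain ⟨j, hj⟩ : ∃ j, IsUnit (a j) := by
    by_contra! h
    exact hz (ha ▸ sum_mem fun i _ => smul_mem_smul ((mem_maximalIdeal _).mpr (h i)) mem_top)
  refine ⟨j, span_range_mkQ_comp_succAbove_eq_top hv _ ?_⟩
  have hsum : ∑ i, a i • (R ∙ z).mkQ (v i) = 0 := by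
    simp_rw [← map_smul, ← map_sum, ha]
    exact (Submodule.Quotient.mk_eq_zero _).mpr (mem_span_singleton_self _)
  rw [Fin.sum_univ_succAbove _ j, add_eq_zero_iff_eq_neg] at hsum
  rw [← smul_mem_iff_of_isUnit _ hj, hsum]
  exact neg_mem (sum_mem fun k _ => smul_mem _ _ (subset_span ⟨k, rfl⟩))

theorem exists_span_eq_top_and_apply_eq {n : ℕ} {l : Fin n → L} (hl : span R (Set.range l) = ⊤)
    {x : Fin n → N} (hx : span R (Set.range x) = ⊤) {f : L →ₗ[R] N} (hf : Surjective f) :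
    ∃ y : Fin n → L, span R (Set.range y) = ⊤ ∧ ∀ i, f (y i) = x i := by
  induction n generalizing L N with
  | zero => exact ⟨l, hl, fun i => i.elim0⟩
  | succ n ih =>
    by_cases hm : ∀ i, x i ∈ maximalIdeal R • (⊤ : Submodule R N)
    · have := subsingleton_of_span_eq_top_of_mem_maximalIdeal_smul hx hm
      exact ⟨l, hl, fun i => Subsingleton.elim _ _⟩
    push Not at hm
    obtain ⟨i, hi⟩ := hm
    obtain ⟨z, hzx⟩ := hf (x i)
    have hz : z ∉ maximalIdeal R • (⊤ : Submodule R L) :=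
      fun h => hi (hzx ▸ smul_top_le_comap_smul_top _ f h)
    obtain ⟨j, hl'⟩ := exists_span_range_mkQ_comp_succAbove_eq_top hl hz
    have hx' := span_range_mkQ_comp_succAbove_eq_top hx ((R ∙ z).map f) (j := i) <| by
      have hxi : x i ∈ (R ∙ z).map f := hzx ▸ mem_map_of_mem (mem_span_singleton_self z)
      rw [mkQ_apply, (Submodule.Quotient.mk_eq_zero _).mpr hxi]
      exact zero_mem _
    obtain ⟨y', hy'span, hy'⟩ := ih hl' hx' (mapQ_map_surjective hf _)
    choose y hfy hy using fun k => exists_apply_eq_and_mkQ_eq_of_mapQ_eq f _ (hy' k)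
    refine ⟨Fin.insertNth i z y, span_range_insertNth_eq_top i (by simpa [hy] using hy'span),
      fun k => ?_⟩
    cases k using Fin.succAboveCases i <;> simp [hzx, hfy]

end

theorem exists_basis_lifting_generators_general
    (𝒪 : Type) [CommRing 𝒪] [IsDomain 𝒪] [IsDiscreteValuationRing 𝒪]
    (N : Type) [AddCommGroup N] [Module 𝒪 N]
    {n : ℕ} (x : Fin n → N) (hx : Submodule.span 𝒪 (Set.range x) = ⊤)
    (L : Type) [AddCommGroup L] [Module 𝒪 L] [Module.Free 𝒪 L] [Module.Finite 𝒪 L]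
    (hrank : Module.finrank 𝒪 L = n)
    (f : L →ₗ[𝒪] N) (hf : Function.Surjective f) :
    ∃ y : Module.Basis (Fin n) 𝒪 L, ∀ i, f (y i) = x i := by
  let b := (Module.finBasis 𝒪 L).reindex (finCongr hrank)
  obtain ⟨y, hspan, hy⟩ := exists_span_eq_top_and_apply_eq b.span_eq hx hf
  exact ⟨basisOfTopLeSpanOfCardEqFinrank y hspan.ge (by simp [hrank]), by simpa using hy⟩

/-- Over a DVR `𝒪`, let `N` be a finite-length module generated by the
`n` elements `x 0, …, x (n-1)`.  For any free module `L` of rank `n` and any surjection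
`f : L ↠ N`, there is a basis `y` of `L` with `f (y i) = x i` for all `i`. -/
theorem exists_basis_lifting_generators
    (𝒪 : Type) [CommRing 𝒪] [IsDomain 𝒪] [IsDiscreteValuationRing 𝒪]
    (N : Type) [AddCommGroup N] [Module 𝒪 N] (hN : IsFiniteLength 𝒪 N)
    {n : ℕ} (x : Fin n → N) (hx : Submodule.span 𝒪 (Set.range x) = ⊤)
    (L : Type) [AddCommGroup L] [Module 𝒪 L] [Module.Free 𝒪 L] [Module.Finite 𝒪 L]
    (hrank : Module.finrank 𝒪 L = n)
    (f : L →ₗ[𝒪] N) (hf : Function.Surjective f) :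
    ∃ y : Module.Basis (Fin n) 𝒪 L, ∀ i, f (y i) = x i :=
  exists_basis_lifting_generators_general 𝒪 N x hx L hrank f hf
end

section
/- Let $R = \mathbb{Z}[x_1, x_2, \ldots]$ be the polynomial ring in countably many variables graded by $\deg x_m = m$, let $I_{n-1}$ be the ideal of elements all of whose homogeneous components have degree at least $n-1$, and for $m \geq 0$ set $y_m = 1 + x_1 + \cdots + x_m$. Then for every $n \geq 1$, the element $f_n = \sum_{r=1}^n (-1)^{n-r} \sum_{0 = n_0 < n_1 < \cdots < n_r = n} y_{n_1 - n_0} y_{n_2 - n_1} \cdots y_{n_r - n_{r-1}}$ belongs to $I_{n-1}$. -/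
open MvPolynomial

/-- `y m = 1 + x₁ + ⋯ + x_m`, where the variable `x_{i+1}` is `X i` (so `deg X i = i+1`). -/
noncomputable def yElt (m : ℕ) : MvPolynomial ℕ ℤ :=
  1 + ∑ i ∈ Finset.range m, X i

open Classical in
/-- `f n = ∑_{r=1}^{n} (-1)^{n-r} ∑_{0=n₀<n₁<⋯<n_r=n} y_{n₁-n₀} ⋯ y_{n_r-n_{r-1}}`. -/
noncomputable def fElt (n : ℕ) : MvPolynomial ℕ ℤ :=
  ∑ r ∈ Finset.Icc 1 n,
    (-1 : MvPolynomial ℕ ℤ) ^ (n - r) *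
      ∑ ν ∈ Finset.univ.filter
          (fun ν : Fin (r + 1) → Fin (n + 1) =>
            StrictMono ν ∧ ν 0 = 0 ∧ ν (Fin.last r) = Fin.last n),
        ∏ j : Fin r, yElt ((ν j.succ : ℕ) - (ν j.castSucc : ℕ))

/-!
Write `𝒳(t) = 1 + ∑ xᵢ tⁱ` and `𝒴(t) = ∑ yₘ tᵐ = 𝒳(t) / (1 - t)`. The inner sum of `fₙ` over
compositions of `n` into `r` parts is the coefficient of `tⁿ` in `(𝒴 - 1)ʳ`, so
`1 + ∑ (-1)ⁿ fₙ tⁿ = ∑ᵣ (1 - 𝒴)ʳ = 1 / 𝒴 = (1 - t) / 𝒳`. Since `𝒳` is homogeneous (its `tⁱ`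
coefficient has degree `i`), so is `1 / 𝒳 = ∑ hₙ tⁿ`, and `(-1)ⁿ fₙ = hₙ - hₙ₋₁` only has components
of degree `n` and `n - 1`.
-/

section Compositions

open Classical in
noncomputable def compositions (r n : ℕ) : Finset (Fin (r + 1) → Fin (n + 1)) :=
  Finset.univ.filter fun ν => StrictMono ν ∧ ν 0 = 0 ∧ ν (Fin.last r) = Fin.last n

theorem mem_compositions {r n : ℕ} {ν : Fin (r + 1) → Fin (n + 1)} :
    ν ∈ compositions r n ↔ StrictMono ν ∧ ν 0 = 0 ∧ ν (Fin.last r) = Fin.last n := by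
  simp [compositions]

theorem snoc_mem_compositions {r s n : ℕ} (hsn : s < n) {ν : Fin (r + 1) → Fin (s + 1)}
    (hν : ν ∈ compositions r s) :
    Fin.snoc (Fin.castLE (Nat.add_le_add_right hsn.le 1) ∘ ν) (Fin.last n) ∈
      compositions (r + 1) n := by
  obtain ⟨hmono, hzero, hlast⟩ := mem_compositions.mp hν
  refine mem_compositions.mpr ⟨Fin.strictMono_iff_lt_succ.mpr fun k => ?_, ?_, Fin.snoc_last _ _⟩
  · induction k using Fin.lastCases with
    | last =>
      simp only [Fin.succ_last, Fin.snoc_last, Fin.snoc_castSucc, Function.comp_apply, hlast]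
      simpa [Fin.lt_def] using hsn
    | cast k =>
      rw [Fin.succ_castSucc, Fin.snoc_castSucc, Fin.snoc_castSucc]
      exact Fin.strictMono_castLE _ (hmono Fin.castSucc_lt_succ)
  · rw [← Fin.castSucc_zero, Fin.snoc_castSucc]
    simp [hzero]

theorem val_castSucc_le_of_mem_compositions {r n : ℕ} {ν : Fin (r + 2) → Fin (n + 1)}
    (hν : ν ∈ compositions (r + 1) n) (j : Fin (r + 1)) :
    (ν j.castSucc : ℕ) ≤ ν (Fin.last r).castSucc :=
  (mem_compositions.mp hν).1.monotone (Fin.castSucc_le_castSucc_iff.mpr (Fin.le_last j))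

theorem clamp_mem_compositions {r n : ℕ} {ν : Fin (r + 2) → Fin (n + 1)}
    (hν : ν ∈ compositions (r + 1) n) :
    (fun j => Fin.clamp (ν j.castSucc) (ν (Fin.last r).castSucc)) ∈
      compositions r (ν (Fin.last r).castSucc) := by
  have hle := val_castSucc_le_of_mem_compositions hν
  obtain ⟨hmono, hzero, -⟩ := mem_compositions.mp hν
  refine mem_compositions.mpr ⟨fun i j hij => ?_, ?_, ?_⟩
  · simp only [Fin.lt_def, Fin.clamp, min_eq_left (hle _)]
    exact hmono (Fin.castSucc_lt_castSucc_iff.mpr hij)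
  · simp [Fin.clamp, hzero]
  · simp [Fin.clamp, Fin.ext_iff]

variable {M : Type*} [CommSemiring M]

noncomputable def compositionSum (a : ℕ → M) (r n : ℕ) : M :=
  ∑ ν ∈ compositions r n, ∏ j : Fin r, a ((ν j.succ : ℕ) - (ν j.castSucc : ℕ))

theorem compositionSum_zero (a : ℕ → M) (n : ℕ) :
    compositionSum a 0 n = if n = 0 then 1 else 0 := by
  rcases n with _ | n
  · simp [compositionSum, compositions, Subsingleton.strictMono, Finset.filter_true_of_mem]
  · rw [compositionSum, if_neg n.succ_ne_zero, Finset.sum_eq_zero]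
    intro ν hν
    obtain ⟨-, hzero, hlast⟩ := mem_compositions.mp hν
    simpa [Fin.ext_iff] using hzero.symm.trans hlast

theorem compositionSum_succ (a : ℕ → M) (r n : ℕ) :
    compositionSum a (r + 1) n = ∑ s ∈ Finset.range n, compositionSum a r s * a (n - s) := by
  unfold compositionSum
  rw [← Finset.sum_fiberwise_of_maps_to (t := Finset.range n)
    (g := fun ν : Fin (r + 2) → Fin (n + 1) => (ν (Fin.last r).castSucc : ℕ))]
  swap
  · intro ν hν
    obtain ⟨hmono, -, hlast⟩ := mem_compositions.mp hν
    have := hmono (Fin.castSucc_lt_last (Fin.last r))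
    rw [hlast, Fin.lt_def, Fin.val_last] at this
    exact Finset.mem_range.mpr this
  refine Finset.sum_congr rfl fun s hs => ?_
  have hsn : s < n := Finset.mem_range.mp hs
  rw [Finset.sum_mul]
  -- a composition of `n` into `r + 1` parts whose last part starts at `s` is a composition of `s`
  -- into `r` parts followed by the point `n`
  refine (Finset.sum_nbij'
    (fun ν' => Fin.snoc (Fin.castLE (Nat.add_le_add_right hsn.le 1) ∘ ν') (Fin.last n))
    (fun ν j => Fin.clamp (ν j.castSucc) s) ?_ ?_ ?_ ?_ ?_).symm
  · intro ν' hν'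
    refine Finset.mem_filter.mpr ⟨snoc_mem_compositions hsn hν', ?_⟩
    simp [(mem_compositions.mp hν').2.2]
  · intro ν hν
    obtain ⟨hcomp, rfl⟩ := Finset.mem_filter.mp hν
    exact clamp_mem_compositions hcomp
  · intro ν' _
    funext j
    simp [Fin.clamp, Nat.le_of_lt_succ (ν' j).isLt]
  · intro ν hν
    obtain ⟨hcomp, rfl⟩ := Finset.mem_filter.mp hν
    funext k
    induction k using Fin.lastCases with
    | last => rw [Fin.snoc_last, (mem_compositions.mp hcomp).2.2]
    | cast k => simp [Fin.clamp, val_castSucc_le_of_mem_compositions hcomp k]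
  · intro ν' hν'
    rw [Fin.prod_univ_castSucc]
    simp only [Fin.succ_last, Fin.snoc_last, Fin.snoc_castSucc, Fin.succ_castSucc,
      Function.comp_apply, Fin.val_castLE, (mem_compositions.mp hν').2.2, Fin.val_last]

theorem compositionSum_eq_coeff_pow (a : ℕ → M) (r n : ℕ) :
    compositionSum a r n =
      PowerSeries.coeff n ((PowerSeries.X * PowerSeries.mk fun m => a (m + 1)) ^ r) := by
  induction r generalizing n with
  | zero => rw [compositionSum_zero, pow_zero, PowerSeries.coeff_one]
  | succ r ih =>
    rw [compositionSum_succ, pow_succ, mul_left_comm]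
    rcases n with _ | n
    · simp
    rw [PowerSeries.coeff_succ_X_mul, PowerSeries.coeff_mul,
      Finset.Nat.sum_antidiagonal_eq_sum_range_succ_mk]
    refine Finset.sum_congr rfl fun s hs => ?_
    rw [ih, PowerSeries.coeff_mk, Nat.sub_add_comm (Finset.mem_range_succ_iff.mp hs)]

end Compositions

namespace PowerSeries

variable {A : Type*} [CommRing A]

theorem coeff_geom_sum_of_mul_one_sub_eq_one {Q ψ : PowerSeries A} (hQ : X ∣ Q)
    (hψ : ψ * (1 - Q) = 1) {n N : ℕ} (hn : n < N) :
    coeff n (∑ r ∈ Finset.range N, Q ^ r) = coeff n ψ := by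
  have hgeom : ∑ r ∈ Finset.range N, Q ^ r = ψ - Q ^ N * ψ :=
    calc ∑ r ∈ Finset.range N, Q ^ r = (∑ r ∈ Finset.range N, Q ^ r) * (1 - Q) * ψ := by
          rw [mul_assoc, mul_comm (1 - Q), hψ, mul_one]
      _ = ψ - Q ^ N * ψ := by rw [geom_sum_mul_neg, sub_mul, one_mul]
  have hvanish : coeff n (Q ^ N * ψ) = 0 :=
    X_pow_dvd_iff.mp (dvd_mul_of_dvd_left (pow_dvd_pow_of_dvd hQ N) ψ) n hn
  rw [hgeom, map_sub, hvanish, sub_zero]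

end PowerSeries

theorem sum_neg_one_pow_mul_compositionSum {A : Type*} [CommRing A] (a : ℕ → A)
    {ψ : PowerSeries A} (hψ : ψ * (1 + PowerSeries.X * PowerSeries.mk fun m => a (m + 1)) = 1)
    (n : ℕ) :
    ∑ r ∈ Finset.range (n + 1), (-1) ^ r * compositionSum a r n = PowerSeries.coeff n ψ := by
  set Q := PowerSeries.X * PowerSeries.mk fun m => a (m + 1)
  rw [← PowerSeries.coeff_geom_sum_of_mul_one_sub_eq_one (Q := -Q) (dvd_neg.mpr (dvd_mul_right _ _))
    (by rwa [sub_neg_eq_add]) n.lt_succ_self, map_sum]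
  refine Finset.sum_congr rfl fun r _ => ?_
  rw [compositionSum_eq_coeff_pow, ← PowerSeries.coeff_C_mul, map_pow PowerSeries.C,
    map_neg PowerSeries.C, map_one, neg_pow Q]

theorem MvPolynomial.isWeightedHomogeneous_coeff_of_mul_eq_one {σ R : Type*} [CommRing R]
    (w : σ → ℕ) {φ ψ : PowerSeries (MvPolynomial σ R)}
    (hφ : ∀ n, IsWeightedHomogeneous w (PowerSeries.coeff n φ) n)
    (hφ₀ : PowerSeries.constantCoeff φ = 1) (hψ : φ * ψ = 1) (n : ℕ) :
    IsWeightedHomogeneous w (PowerSeries.coeff n ψ) n := by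
  induction n using Nat.strong_induction_on with
  | _ n ih =>
  have hsplit := Finset.add_sum_erase (Finset.HasAntidiagonal.antidiagonal n)
    (fun p => PowerSeries.coeff p.1 φ * PowerSeries.coeff p.2 ψ)
    (by simp : ((0, n) : ℕ × ℕ) ∈ Finset.HasAntidiagonal.antidiagonal n)
  rw [← PowerSeries.coeff_mul, hψ, PowerSeries.coeff_zero_eq_constantCoeff_apply, hφ₀, one_mul]
    at hsplit
  rw [eq_sub_of_add_eq hsplit]
  refine .sub ?_ (.sum _ _ _ fun p hp => ?_)
  · rw [PowerSeries.coeff_one]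
    split_ifs with h
    · exact h ▸ isWeightedHomogeneous_one R w
    · exact isWeightedHomogeneous_zero R w n
  · obtain ⟨hp0, hp⟩ := Finset.mem_erase.mp hp
    rw [Finset.HasAntidiagonal.mem_antidiagonal] at hp
    have hp2 : p.2 < n := by
      rcases p with ⟨_ | i, j⟩
      · exact absurd (by simpa using hp) hp0
      · simp only at hp ⊢; omega
    simpa [hp] using (hφ p.1).mul (ih p.2 hp2)

noncomputable def xSeries : PowerSeries (MvPolynomial ℕ ℤ) :=
  1 + PowerSeries.X * PowerSeries.mk X

noncomputable def xSeriesInv : PowerSeries (MvPolynomial ℕ ℤ) :=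
  PowerSeries.invOfUnit xSeries 1

theorem constantCoeff_xSeries : PowerSeries.constantCoeff xSeries = 1 := by
  simp [xSeries]

theorem xSeries_mul_xSeriesInv : xSeries * xSeriesInv = 1 :=
  PowerSeries.mul_invOfUnit _ _ (by rw [constantCoeff_xSeries, Units.val_one])

theorem isWeightedHomogeneous_coeff_xSeries (n : ℕ) :
    IsWeightedHomogeneous (· + 1) (PowerSeries.coeff n xSeries) n := by
  rcases n with _ | m
  · simpa [xSeries] using isWeightedHomogeneous_one ℤ (fun i : ℕ => i + 1)
  · simpa [xSeries, PowerSeries.coeff_one] using isWeightedHomogeneous_X ℤ (fun i : ℕ => i + 1) m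

theorem isWeightedHomogeneous_coeff_xSeriesInv (n : ℕ) :
    IsWeightedHomogeneous (· + 1) (PowerSeries.coeff n xSeriesInv) n :=
  isWeightedHomogeneous_coeff_of_mul_eq_one _ isWeightedHomogeneous_coeff_xSeries
    constantCoeff_xSeries xSeries_mul_xSeriesInv n

theorem mk_yElt :
    PowerSeries.mk yElt = 1 + PowerSeries.X * PowerSeries.mk fun m => yElt (m + 1) := by
  ext (_ | m) <;> simp [yElt, PowerSeries.coeff_one]

theorem one_sub_X_mul_mk_yElt : (1 - PowerSeries.X) * PowerSeries.mk yElt = xSeries := by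
  ext (_ | m)
  · simp [xSeries, yElt]
  · simp [xSeries, sub_mul, PowerSeries.coeff_one, yElt, Finset.sum_range_succ]

theorem fElt_eq_sum_compositionSum (n : ℕ) :
    fElt n = ∑ r ∈ Finset.Icc 1 n, (-1) ^ (n - r) * compositionSum yElt r n :=
  rfl

theorem neg_one_pow_mul_fElt (m : ℕ) :
    (-1) ^ (m + 1) * fElt (m + 1) =
      PowerSeries.coeff (m + 1) xSeriesInv - PowerSeries.coeff m xSeriesInv := by
  have hinv : (1 - PowerSeries.X) * xSeriesInv *
      (1 + PowerSeries.X * PowerSeries.mk fun i => yElt (i + 1)) = 1 := by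
    rw [← mk_yElt, mul_right_comm, one_sub_X_mul_mk_yElt, xSeries_mul_xSeriesInv]
  have hcoeff : PowerSeries.coeff (m + 1) ((1 - PowerSeries.X) * xSeriesInv) =
      PowerSeries.coeff (m + 1) xSeriesInv - PowerSeries.coeff m xSeriesInv := by
    rw [sub_mul, one_mul, map_sub, PowerSeries.coeff_succ_X_mul]
  rw [← hcoeff, ← sum_neg_one_pow_mul_compositionSum yElt hinv, Finset.range_eq_Ico,
    Finset.sum_eq_sum_Ico_succ_bot (by omega), zero_add, Finset.Ico_add_one_right_eq_Icc,
    compositionSum_zero, if_neg m.succ_ne_zero, mul_zero, zero_add, fElt_eq_sum_compositionSum,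
    Finset.mul_sum]
  refine Finset.sum_congr rfl fun r hr => ?_
  obtain ⟨k, hk⟩ := Nat.exists_eq_add_of_le (Finset.mem_Icc.mp hr).2
  rw [hk, Nat.add_sub_cancel_left, ← mul_assoc, pow_add, mul_assoc ((-1) ^ r), ← pow_add,
    (Even.add_self k).neg_one_pow, mul_one]

theorem weight_add_one_eq_sum (d : ℕ →₀ ℕ) :
    Finsupp.weight (· + 1) d = d.sum fun i k => (i + 1) * k := by
  simp [Finsupp.weight_apply, mul_comm]

/-- In `R = ℤ[x₁,x₂,…]` graded by `deg x_m = m`, the element `f n`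
lies in the ideal `I_{n-1}` of elements all of whose homogeneous components have weighted
degree at least `n - 1`: every monomial of `f n` with nonzero coefficient has weighted
degree `≥ n - 1`. -/
theorem fElt_mem_I
    (n : ℕ) (hn : 1 ≤ n) (d : ℕ →₀ ℕ) (hd : MvPolynomial.coeff d (fElt n) ≠ 0) :
    n - 1 ≤ d.sum fun i k => (i + 1) * k := by
  obtain ⟨m, rfl⟩ := Nat.exists_eq_add_of_le' hn
  have hcoeff : MvPolynomial.coeff d (PowerSeries.coeff (m + 1) xSeriesInv) ≠ 0 ∨
      MvPolynomial.coeff d (PowerSeries.coeff m xSeriesInv) ≠ 0 := by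
    contrapose! hd
    have := congrArg (MvPolynomial.coeff d) (neg_one_pow_mul_fElt m)
    rcases neg_one_pow_eq_or (MvPolynomial ℕ ℤ) (m + 1) with h | h <;> simpa [h, hd] using this
  rw [Nat.add_sub_cancel, ← weight_add_one_eq_sum]
  rcases hcoeff with h | h
  · exact (isWeightedHomogeneous_coeff_xSeriesInv (m + 1) h).ge.trans' m.le_succ
  · exact (isWeightedHomogeneous_coeff_xSeriesInv m h).ge
end

section
/- Let $\mathfrak{o}$ be a discrete valuation ring, $M$ a finite-length $\mathfrak{o}$-module, $L$ a free $\mathfrak{o}$-module of rank $n = n_1 + \cdots + n_r$, and $f: L \twoheadrightarrow M$ a surjection. Suppose $0 = F_0 L \subset \cdots \subset F_r L = L$ is a filtration by submodules with $F_i L / F_{i-1} L$ free of rank $n_i$, and let $F_i M = f(F_i L)$. If $x_1, \ldots, x_n \in M$ is a sequence such that $x_1, \ldots, x_{n_1 + \cdots + n_i}$ generate $F_i M$ for each $i$, then there exists a sequence $y_1, \ldots, y_n \in L$ with $f(y_j) = x_j$ for all $j$ and such that $y_1, \ldots, y_{n_1 + \cdots + n_i}$ generate $F_i L$ for each $i$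 (in particular $y_1,\ldots,y_n$ is a basis of $L$). -/
/-- The `j`-th graded piece `F (j+1) / F j` of a filtration by submodules. -/
def FilGraded {𝒪 L : Type} [CommRing 𝒪] [AddCommGroup L] [Module 𝒪 L] {r : ℕ}
    (F : Fin (r + 1) → Submodule 𝒪 L) (j : Fin r) : Type :=
  ↥(F j.succ) ⧸ Submodule.comap (F j.succ).subtype (F j.castSucc)

noncomputable instance {𝒪 L : Type} [CommRing 𝒪] [AddCommGroup L] [Module 𝒪 L] {r : ℕ}
    (F : Fin (r + 1) → Submodule 𝒪 L) (j : Fin r) : AddCommGroup (FilGraded F j) :=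
  Submodule.Quotient.addCommGroup _

noncomputable instance {𝒪 L : Type} [CommRing 𝒪] [AddCommGroup L] [Module 𝒪 L] {r : ℕ}
    (F : Fin (r + 1) → Submodule 𝒪 L) (j : Fin r) : Module 𝒪 (FilGraded F j) :=
  Submodule.Quotient.module _

/-- The partial sum `n₁ + ⋯ + n_i` of a partition. -/
def psum {r : ℕ} (nvec : Fin r → ℕ) (i : ℕ) : ℕ :=
  ∑ j ∈ Finset.univ.filter (fun j : Fin r => (j : ℕ) < i), nvec j

/-!
The lifts are built one graded piece at a time. Over a local ring, let `Q` be free of rank `k`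
and `N ≤ Q`; then any `k` elements of `Q` that span `Q` modulo `N` can be moved by elements of `N`
to a generating family of `Q`. Over the residue field this is an exchange argument: as long as the
family does not span, some member depends on the others, and adding to it a vector of `N` outside
the current span enlarges the span. By Nakayama, spanning over the local ring can be tested after
base change to the residue field. Applied to `Q = F_i L / F_{i-1} L` with `N` the image of
`ker f`, this corrects arbitrary lifts of the `i`-th block of `x` into lifts that generate `F_i L`
together with `F_{i-1} L`. Finally, `n = rank L` generators of `L` form a basis.
-/

open Module Submodule Set

theorem exists_sub_mem_span_lt_span {K V ι : Type*} [DivisionRing K] [AddCommGroup V] [Module K V]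
    [FiniteDimensional K V] [Fintype ι] {W : Submodule K V} {c : ι → V}
    (hcard : finrank K V ≤ Fintype.card ι) (hspan : span K (range c) ⊔ W = ⊤)
    (hne : span K (range c) ≠ ⊤) :
    ∃ c' : ι → V, (∀ i, c' i - c i ∈ W) ∧ span K (range c) < span K (range c') := by
  classical
  obtain ⟨w, hwW, hwc⟩ : ∃ w ∈ W, w ∉ span K (range c) := by
    by_contra! h
    exact hne (by rwa [sup_eq_left.mpr h] at hspan)
  have hdep : ¬ LinearIndependent K c := fun hli =>
    hne (eq_top_of_finrank_eq <| (finrank_le _).antisymm <|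
      hcard.trans (finrank_span_eq_card hli).ge)
  obtain ⟨i₀, hi₀⟩ : ∃ i₀, c i₀ ∈ span K (c '' (univ \ {i₀})) := by
    simpa [linearIndependent_iff_notMem_span] using hdep
  set c' := c + Pi.single i₀ w
  have hle : span K (range c) ≤ span K (range c') := by
    have hsub : c '' (univ \ {i₀}) ⊆ range c' := by
      rintro _ ⟨i, ⟨-, hi⟩, rfl⟩
      exact ⟨i, by simp [c', Set.mem_singleton_iff.not.mp hi]⟩
    refine span_le.mpr ?_
    rintro _ ⟨i, rfl⟩
    obtain rfl | hi := eq_or_ne i i₀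
    · exact span_mono hsub hi₀
    · exact subset_span ⟨i, by simp [c', hi]⟩
  have hw : w ∈ span K (range c') := by
    simpa [c'] using
      sub_mem (subset_span (mem_range_self i₀)) (hle (subset_span (mem_range_self i₀)))
  refine ⟨c', fun i => ?_, hle.lt_of_ne fun h => hwc (h ▸ hw)⟩
  by_cases hi : i = i₀ <;> simp [c', hi, hwW]

theorem exists_sub_mem_span_eq_top {K V ι : Type*} [DivisionRing K] [AddCommGroup V] [Module K V]
    [FiniteDimensional K V] [Fintype ι] {W : Submodule K V} {c : ι → V}
    (hcard : finrank K V ≤ Fintype.card ι) (hspan : span K (range c) ⊔ W = ⊤) :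
    ∃ c' : ι → V, (∀ i, c' i - c i ∈ W) ∧ span K (range c') = ⊤ := by
  obtain ⟨_, ⟨c', hc'W, rfl⟩, hmax⟩ := set_has_maximal_iff_noetherian.mpr inferInstance
    {U | ∃ c' : ι → V, (∀ i, c' i - c i ∈ W) ∧ span K (range c') = U} ⟨_, c, by simp, rfl⟩
  refine ⟨c', hc'W, by_contra fun hne => ?_⟩
  have hspan' : span K (range c') ⊔ W = ⊤ := by
    refine eq_top_iff.mpr (hspan ▸ sup_le (span_le.mpr ?_) le_sup_right)
    rintro _ ⟨i, rfl⟩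
    simpa using sub_mem_sup (subset_span (mem_range_self (f := c') i)) (hc'W i)
  obtain ⟨c'', hc''W, hlt⟩ := exists_sub_mem_span_lt_span hcard hspan' hne
  exact hmax _ ⟨c'', fun i => by simpa using W.add_mem (hc''W i) (hc'W i), rfl⟩ hlt

theorem IsLocalRing.exists_sub_mem_span_eq_top {R Q ι : Type*} [CommRing R] [IsLocalRing R]
    [AddCommGroup Q] [Module R Q] [Module.Free R Q] [Module.Finite R Q] [Fintype ι]
    {N : Submodule R Q} {c : ι → Q} (hcard : finrank R Q ≤ Fintype.card ι)
    (hspan : span R (range c) ⊔ N = ⊤) :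
    ∃ c' : ι → Q, (∀ i, c' i - c i ∈ N) ∧ span R (range c') = ⊤ := by
  let k := ResidueField R
  let π := TensorProduct.mk R k Q 1
  have hspan_restrict (s : Set Q) : (span k (π '' s)).restrictScalars R = (span R s).map π := by
    rw [restrictScalars_span R k Ideal.Quotient.mk_surjective, map_span]
  have hN : (span k (π '' N)).restrictScalars R = N.map π := by rw [hspan_restrict, span_eq]
  have hspan_k : span k (range (π ∘ c)) ⊔ span k (π '' N) = ⊤ := by
    refine eq_top_iff.mpr fun v _ => ?_
    obtain ⟨q, rfl⟩ := TensorProduct.mk_surjective R Q k Ideal.Quotient.mk_surjective v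
    obtain ⟨a, ha, b, hb, rfl⟩ := mem_sup.mp (hspan ▸ mem_top : q ∈ span R (range c) ⊔ N)
    rw [map_add]
    refine add_mem_sup ?_ (subset_span (mem_image_of_mem π hb))
    rw [range_comp, ← restrictScalars_mem R, hspan_restrict]
    exact mem_map_of_mem ha
  obtain ⟨c', hc'N, hc'⟩ := _root_.exists_sub_mem_span_eq_top
    (by rwa [finrank_baseChange]) hspan_k
  choose n hnN hn using fun i => mem_map.mp (hN ▸ (restrictScalars_mem R _ _).mpr (hc'N i))
  refine ⟨fun i => c i + n i, fun i => by simpa using hnN i, ?_⟩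
  have hlift : π ∘ (fun i => c i + n i) = c' := funext fun i => by simp [hn]
  rw [← IsLocalRing.map_tensorProduct_mk_eq_top, ← hspan_restrict, ← range_comp, hlift, hc',
    restrictScalars_top]

theorem exists_sub_mem_sup_span_eq_top {R P ι : Type*} [CommRing R] [IsLocalRing R]
    [AddCommGroup P] [Module R P] [Fintype ι] {F N : Submodule R P}
    [Module.Free R (P ⧸ F)] [Module.Finite R (P ⧸ F)] {z : ι → P}
    (hcard : finrank R (P ⧸ F) ≤ Fintype.card ι) (hsup : F ⊔ span R (range z) ⊔ N = ⊤) :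
    ∃ y : ι → P, (∀ i, y i - z i ∈ N) ∧ F ⊔ span R (range y) = ⊤ := by
  have h : span R (range (F.mkQ ∘ z)) ⊔ N.map F.mkQ = ⊤ := by
    rw [range_comp, ← map_span, ← Submodule.map_sup, map_mkQ_eq_top, ← sup_assoc, hsup]
  obtain ⟨c, hcN, hc⟩ := IsLocalRing.exists_sub_mem_span_eq_top hcard h
  choose n hnN hn using fun i => mem_map.mp (hcN i)
  refine ⟨fun i => z i + n i, fun i => by simpa using hnN i, ?_⟩
  have hlift : F.mkQ ∘ (fun i => z i + n i) = c := funext fun i => by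
    rw [Function.comp_apply, map_add, hn, Function.comp_apply, add_sub_cancel]
  rw [← map_mkQ_eq_top, map_span, ← range_comp, hlift, hc]

theorem exists_apply_eq_sup_span_eq {R L M ι : Type*} [CommRing R] [IsLocalRing R]
    [AddCommGroup L] [Module R L] [AddCommGroup M] [Module R M] [Fintype ι]
    {F F' : Submodule R L} (hle : F ≤ F') [Module.Free R (F' ⧸ F.comap F'.subtype)]
    [Module.Finite R (F' ⧸ F.comap F'.subtype)] (f : L →ₗ[R] M) {z : ι → L} (hz : ∀ i, z i ∈ F')
    (hcard : finrank R (F' ⧸ F.comap F'.subtype) ≤ Fintype.card ι)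
    (hmap : F'.map f ≤ F.map f ⊔ span R (range (f ∘ z))) :
    ∃ y : ι → L, (∀ i, f (y i) = f (z i)) ∧ F ⊔ span R (range y) = F' := by
  let z' : ι → F' := fun i => ⟨z i, hz i⟩
  have hz' : F'.subtype ∘ z' = z := rfl
  have hspan_le : F ⊔ span R (range z) ≤ F' := sup_le hle (span_le.mpr (range_subset_iff.mpr hz))
  have hker : F' ≤ F ⊔ span R (range z) ⊔ LinearMap.ker f := by
    rw [← comap_map_eq, Submodule.map_sup, map_span, ← range_comp]
    exact le_comap_map f F' |>.trans (comap_mono hmap)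
  have hsup : F.comap F'.subtype ⊔ span R (range z') ⊔ (LinearMap.ker f).comap F'.subtype = ⊤ := by
    refine map_injective_of_injective F'.injective_subtype ?_
    rw [Submodule.map_sup, Submodule.map_sup, map_comap_subtype, map_comap_subtype, map_span,
      ← range_comp, hz', Submodule.map_top, range_subtype, inf_eq_right.mpr hle, inf_comm,
      ← sup_inf_assoc_of_le _ hspan_le]
    exact inf_eq_right.mpr hker
  obtain ⟨y, hyN, hy⟩ := exists_sub_mem_sup_span_eq_top hcard hsup
  refine ⟨fun i => y i, fun i => ?_, ?_⟩
  · simpa [sub_eq_zero] using hyN i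
  · have := congrArg (map F'.subtype) hy
    rwa [Submodule.map_sup, map_comap_subtype, inf_eq_right.mpr hle, map_span, ← range_comp,
      Submodule.map_top, range_subtype] at this

theorem psum_mono {r : ℕ} (nvec : Fin r → ℕ) : Monotone (psum nvec) := fun _ _ h =>
  Finset.sum_le_sum_of_subset fun j => by
    simp only [Finset.mem_filter, Finset.mem_univ, true_and]; omega

theorem psum_succ {r : ℕ} (nvec : Fin r → ℕ) (i : Fin r) :
    psum nvec (i + 1) = psum nvec i + nvec i := by
  have : Finset.univ.filter (fun j : Fin r => (j : ℕ) < i + 1) =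
      insert i (Finset.univ.filter (fun j : Fin r => (j : ℕ) < i)) := by
    ext j
    simp only [Finset.mem_filter, Finset.mem_univ, true_and, Finset.mem_insert, Fin.ext_iff]
    omega
  rw [psum, this, Finset.sum_insert (by simp), psum, add_comm]

theorem psum_of_le {r : ℕ} (nvec : Fin r → ℕ) {m : ℕ} (h : r ≤ m) : psum nvec m = ∑ j, nvec j := by
  rw [psum, Finset.filter_true_of_mem fun j _ => j.isLt.trans_le h]

theorem finSigmaFinEquiv_val_eq_psum {r : ℕ} {nvec : Fin r → ℕ} (σ : (i : Fin r) × Fin (nvec i)) :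
    (finSigmaFinEquiv σ : ℕ) = psum nvec σ.1 + σ.2 := by
  rw [finSigmaFinEquiv_apply, psum]
  congr 1
  exact Finset.sum_bij (fun k _ => Fin.castLE σ.1.2.le k)
    (fun k _ => Finset.mem_filter.mpr ⟨Finset.mem_univ _, k.2⟩)
    (fun _ _ _ _ h => Fin.castLE_injective _ h)
    (fun j hj => ⟨⟨j, (Finset.mem_filter.mp hj).2⟩, Finset.mem_univ _, rfl⟩) fun _ _ => rfl

theorem finSigmaFinEquiv_lt_psum_iff {r : ℕ} {nvec : Fin r → ℕ} (σ : (i : Fin r) × Fin (nvec i))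
    (m : ℕ) : (finSigmaFinEquiv σ : ℕ) < psum nvec m ↔ (σ.1 : ℕ) < m := by
  rw [finSigmaFinEquiv_val_eq_psum]
  constructor
  · intro h
    by_contra! hm
    exact (psum_mono nvec hm).not_gt (by omega)
  · intro h
    have := psum_succ nvec σ.1
    have := psum_mono nvec (show (σ.1 : ℕ) + 1 ≤ m from h)
    omega

theorem image_sigma_fst_lt_succ {r : ℕ} {κ : Fin r → Type*} {α : Type*}
    (g : (Σ i, κ i) → α) (i : Fin r) :
    g '' {σ | (σ.1 : ℕ) < i + 1} = g '' {σ | (σ.1 : ℕ) < i} ∪ range fun t => g ⟨i, t⟩ := by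
  ext a
  constructor
  · rintro ⟨⟨j, t⟩, hj, rfl⟩
    rcases Nat.lt_succ_iff_lt_or_eq.mp hj with hj | hj
    · exact Or.inl ⟨_, hj, rfl⟩
    · obtain rfl := Fin.ext hj
      exact Or.inr ⟨t, rfl⟩
  · rintro (⟨σ, hσ, rfl⟩ | ⟨t, rfl⟩)
    · exact ⟨σ, Nat.lt_succ_of_lt hσ, rfl⟩
    · exact ⟨⟨i, t⟩, Nat.lt_succ_self _, rfl⟩

theorem span_image_sigma_fst_lt {R L : Type*} [Semiring R] [AddCommMonoid L] [Module R L]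
    {r : ℕ} {κ : Fin r → Type*} {F : Fin (r + 1) → Submodule R L} (h0 : F 0 = ⊥)
    (y : (Σ i, κ i) → L)
    (hy : ∀ i : Fin r, F i.castSucc ⊔ span R (range fun t => y ⟨i, t⟩) = F i.succ)
    (i : Fin (r + 1)) : span R (y '' {σ | (σ.1 : ℕ) < i}) = F i := by
  induction i using Fin.induction with
  | zero => simp [h0]
  | succ i ih => rw [Fin.val_succ, image_sigma_fst_lt_succ, span_union, ← Fin.val_castSucc, ih, hy]

theorem image_setOf_lt_psum {r : ℕ} {nvec : Fin r → ℕ} {α : Type*} (g : Fin (∑ j, nvec j) → α)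
    (m : ℕ) : g '' {j | (j : ℕ) < psum nvec m} = (g ∘ finSigmaFinEquiv) '' {σ | (σ.1 : ℕ) < m} := by
  rw [← finSigmaFinEquiv.image_preimage {j | _}, image_comp]
  congr 2
  ext σ
  exact finSigmaFinEquiv_lt_psum_iff σ m

theorem exists_lift_graded_piece {R L M : Type} [CommRing R] [IsLocalRing R]
    [AddCommGroup L] [Module R L] [AddCommGroup M] [Module R M] {r : ℕ} {κ : Fin r → Type*}
    [∀ i, Fintype (κ i)] {F : Fin (r + 1) → Submodule R L} (hmono : Monotone F)
    (f : L →ₗ[R] M) (X : (Σ i, κ i) → M)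
    (hX : ∀ i : Fin (r + 1), span R (X '' {σ | (σ.1 : ℕ) < i}) = (F i).map f)
    (i : Fin r) (hfree : Nonempty (FilGraded F i ≃ₗ[R] (κ i → R))) :
    ∃ y : κ i → L, (∀ t, f (y t) = X ⟨i, t⟩) ∧ F i.castSucc ⊔ span R (range y) = F i.succ := by
  obtain ⟨e⟩ := hfree
  let e' : (F i.succ ⧸ (F i.castSucc).comap (F i.succ).subtype) ≃ₗ[R] (κ i → R) := e
  have := Module.Free.of_equiv e'.symm
  have := Module.Finite.equiv e'.symm
  have hlift (t : κ i) : X ⟨i, t⟩ ∈ (F i.succ).map f := by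
    rw [← hX]
    exact subset_span ⟨⟨i, t⟩, by simp, rfl⟩
  choose z hz hfz using fun t => mem_map.mp (hlift t)
  have hmap : (F i.succ).map f ≤ (F i.castSucc).map f ⊔ span R (range (f ∘ z)) := by
    rw [← hX, ← hX, Fin.val_succ, image_sigma_fst_lt_succ, span_union, Fin.val_castSucc,
      show f ∘ z = _ from funext hfz]
  obtain ⟨y, hfy, hy⟩ := exists_apply_eq_sup_span_eq (hmono i.castSucc_le_succ) f hz
    (by simp [e'.finrank_eq]) hmap
  exact ⟨y, fun t => (hfy t).trans (hfz t), hy⟩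

theorem exists_sigma_compatible_lift {R L M : Type} [CommRing R] [IsLocalRing R]
    [AddCommGroup L] [Module R L] [AddCommGroup M] [Module R M] {r : ℕ} {κ : Fin r → Type*}
    [∀ i, Fintype (κ i)] {F : Fin (r + 1) → Submodule R L} (hmono : Monotone F) (h0 : F 0 = ⊥)
    (hfree : ∀ i, Nonempty (FilGraded F i ≃ₗ[R] (κ i → R))) (f : L →ₗ[R] M)
    (X : (Σ i, κ i) → M)
    (hX : ∀ i : Fin (r + 1), span R (X '' {σ | (σ.1 : ℕ) < i}) = (F i).map f) :
    ∃ Y : (Σ i, κ i) → L, (∀ σ, f (Y σ) = X σ) ∧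
      ∀ i : Fin (r + 1), span R (Y '' {σ | (σ.1 : ℕ) < i}) = F i := by
  choose Y hYf hY using fun i => exists_lift_graded_piece hmono f X hX i (hfree i)
  exact ⟨fun σ => Y σ.1 σ.2, fun σ => hYf σ.1 σ.2, span_image_sigma_fst_lt h0 _ hY⟩

theorem exists_compatible_lift_of_filtration_general
    (𝒪 : Type) [CommRing 𝒪] [IsDomain 𝒪] [IsDiscreteValuationRing 𝒪]
    (M : Type) [AddCommGroup M] [Module 𝒪 M]
    {r : ℕ} (nvec : Fin r → ℕ)
    {n : ℕ} (hn : n = ∑ j, nvec j)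
    (L : Type) [AddCommGroup L] [Module 𝒪 L]
    (hrank : Module.finrank 𝒪 L = n)
    (f : L →ₗ[𝒪] M)
    (FL : Fin (r + 1) → Submodule 𝒪 L) (hmono : Monotone FL)
    (h0 : FL 0 = ⊥) (htop : FL (Fin.last r) = ⊤)
    (hfree : ∀ j : Fin r, Nonempty (FilGraded FL j ≃ₗ[𝒪] (Fin (nvec j) → 𝒪)))
    (x : Fin n → M)
    (hx : ∀ i : Fin (r + 1),
      Submodule.span 𝒪 (x '' {j : Fin n | (j : ℕ) < psum nvec (i : ℕ)}) =
        Submodule.map f (FL i)) :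
    ∃ y : Fin n → L,
      (∀ j, f (y j) = x j) ∧
      (∀ i : Fin (r + 1),
        Submodule.span 𝒪 (y '' {j : Fin n | (j : ℕ) < psum nvec (i : ℕ)}) = FL i) ∧
      ∃ b : Module.Basis (Fin n) 𝒪 L, ∀ j, b j = y j := by
  subst hn
  obtain ⟨Y, hYf, hY⟩ := exists_sigma_compatible_lift hmono h0 hfree f (x ∘ finSigmaFinEquiv)
    fun i => image_setOf_lt_psum x i ▸ hx i
  let y := Y ∘ finSigmaFinEquiv.symm
  have hy (i : Fin (r + 1)) : span 𝒪 (y '' {j | (j : ℕ) < psum nvec i}) = FL i := by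
    rw [image_setOf_lt_psum, Function.comp_assoc, Equiv.symm_comp_self, Function.comp_id, hY]
  have hspan : span 𝒪 (range y) = ⊤ := by
    simpa [psum_of_le, htop] using hy (Fin.last r)
  refine ⟨y, fun j => by simp [y, hYf], hy,
    basisOfTopLeSpanOfCardEqFinrank y hspan.ge (by simp [hrank]), fun j => by simp⟩

/-- Over a DVR `𝒪`, let `f : L ↠ M` be a surjection from a free module
of rank `n = n₁ + ⋯ + n_r` onto a finite-length module, `F_• L` a filtration with free
graded quotients of ranks `n_i`, and `F_i M = f(F_i L)` the induced filtration.  Any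
sequence `x₁, …, x_n` of `M` compatible with `F_• M` lifts to a sequence `y₁, …, y_n`
of `L` compatible with `F_• L` (hence a basis of `L`) with `f(y_j) = x_j`. -/
theorem exists_compatible_lift_of_filtration
    (𝒪 : Type) [CommRing 𝒪] [IsDomain 𝒪] [IsDiscreteValuationRing 𝒪]
    (M : Type) [AddCommGroup M] [Module 𝒪 M] (hM : IsFiniteLength 𝒪 M)
    {r : ℕ} (nvec : Fin r → ℕ) (hpos : ∀ j, 1 ≤ nvec j)
    {n : ℕ} (hn : n = ∑ j, nvec j)
    (L : Type) [AddCommGroup L] [Module 𝒪 L] [Module.Free 𝒪 L] [Module.Finite 𝒪 L]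
    (hrank : Module.finrank 𝒪 L = n)
    (f : L →ₗ[𝒪] M) (hf : Function.Surjective f)
    (FL : Fin (r + 1) → Submodule 𝒪 L) (hmono : Monotone FL)
    (h0 : FL 0 = ⊥) (htop : FL (Fin.last r) = ⊤)
    (hfree : ∀ j : Fin r, Nonempty (FilGraded FL j ≃ₗ[𝒪] (Fin (nvec j) → 𝒪)))
    (x : Fin n → M)
    (hx : ∀ i : Fin (r + 1),
      Submodule.span 𝒪 (x '' {j : Fin n | (j : ℕ) < psum nvec (i : ℕ)}) =
        Submodule.map f (FL i)) :
    ∃ y : Fin n → L,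
      (∀ j, f (y j) = x j) ∧
      (∀ i : Fin (r + 1),
        Submodule.span 𝒪 (y '' {j : Fin n | (j : ℕ) < psum nvec (i : ℕ)}) = FL i) ∧
      ∃ b : Module.Basis (Fin n) 𝒪 L, ∀ j, b j = y j :=
  exists_compatible_lift_of_filtration_general 𝒪 M nvec hn L hrank f FL hmono h0 htop hfree x hx
end
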